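/- Let P ⊆ ℝⁿ be a polytope, v ∈ ℝⁿ, and F, G nonempty faces of P. Then (F,G) ∈ F^φ if and only if (N_P(F) + εv) ∩ N_P(G) ≠ ∅ for all ε > 0, if and only if N_P(F) ∩ (N_P(G) − εv) ≠ ∅ for all ε > 0. Moreover, if P is full-dimensional (dim P = n) and the coherent subdivision π(F^φ) is tight, then a pair (F,G) ∈ F^φ satisfies dim F + dim G = dim P if and only if the intersection (N_P(F) + εv) ∩ N_P(G) has dimension zero. -/

import Mathlib

open scoped BigOperators

noncomputable section

/-- Vectors in `ℝⁿ`. -/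
abbrev Vec (n : ℕ) := Fin n → ℝ

/-- The standard scalar product on `ℝⁿ`. -/
def dot {n : ℕ} (x y : Vec n) : ℝ := ∑ i, x i * y i

/-- A polytope is the convex hull of a finite set of points. -/
def IsPolytope {n : ℕ} (P : Set (Vec n)) : Prop :=
  ∃ S : Finset (Vec n), P = convexHull ℝ (S : Set (Vec n))

/-- A face of `P`: either `P` itself (take `c = 0`) or the subset of `P` where some linear
functional attains its maximum over `P`. -/
def IsFace {n : ℕ} (P F : Set (Vec n)) : Prop :=
  ∃ c : Vec n, F = {x ∈ P | ∀ y ∈ P, dot c y ≤ dot c x}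

/-- Dimension of a subset of `ℝⁿ`: the rank of the direction of its affine span. -/
noncomputable def sdim {n : ℕ} (A : Set (Vec n)) : ℕ :=
  Module.finrank ℝ (affineSpan ℝ A).direction

/-- The normal cone of a face `F` of `P`. -/
def normalCone {n : ℕ} (P F : Set (Vec n)) : Set (Vec n) :=
  {c | F ⊆ {x ∈ P | ∀ y ∈ P, dot c y ≤ dot c x}}

/-- `coneOf X`: nonnegative linear combinations of finitely many elements of `X`. -/
def coneOf {n : ℕ} (X : Set (Vec n)) : Set (Vec n) :=
  {v | ∃ (k : ℕ) (x : Fin k → Vec n) (l : Fin k → ℝ),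
      (∀ i, x i ∈ X) ∧ (∀ i, 0 ≤ l i) ∧ v = ∑ i, l i • x i}

/-- The reflection `ρ_z P = 2z - P` of `P` with respect to `z`. -/
def reflP {n : ℕ} (z : Vec n) (P : Set (Vec n)) : Set (Vec n) :=
  (fun x => (2 : ℝ) • z - x) '' P

/-- An edge is a 1-dimensional face. -/
def IsEdge {n : ℕ} (P E : Set (Vec n)) : Prop := IsFace P E ∧ sdim E = 1

/-- `(P, v)` is oriented if `v` is not perpendicular to any edge of `P`. -/
def Oriented {n : ℕ} (P : Set (Vec n)) (v : Vec n) : Prop :=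
  ∀ E, IsEdge P E → ∀ d ∈ (affineSpan ℝ E).direction, d ≠ 0 → dot d v ≠ 0

/-- `(P, v)` is positively oriented if `(P ∩ ρ_z P, v)` is oriented for every `z ∈ P`. -/
def PosOriented {n : ℕ} (P : Set (Vec n)) (v : Vec n) : Prop :=
  ∀ z ∈ P, Oriented (P ∩ reflP z P) v

/-- `x` is the minimizer of `⟨-, v⟩` on `P`. -/
def IsBotOf {n : ℕ} (P : Set (Vec n)) (v x : Vec n) : Prop :=
  x ∈ P ∧ ∀ y ∈ P, dot v x ≤ dot v y

/-- `x` is the maximizer of `⟨-, v⟩` on `P`. -/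
def IsTopOf {n : ℕ} (P : Set (Vec n)) (v x : Vec n) : Prop :=
  x ∈ P ∧ ∀ y ∈ P, dot v y ≤ dot v x

/-- `(P, v)` is quasi-oriented if `⟨-, v⟩` has a unique minimizer and a unique maximizer on `P`. -/
def QuasiOriented {n : ℕ} (P : Set (Vec n)) (v : Vec n) : Prop :=
  (∃! x, IsBotOf P v x) ∧ (∃! x, IsTopOf P v x)

/-- `(P, v)` is quasi-positively oriented if `(P ∩ ρ_z P, v)` is quasi-oriented for all `z ∈ P`. -/
def QuasiPosOriented {n : ℕ} (P : Set (Vec n)) (v : Vec n) : Prop :=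
  ∀ z ∈ P, QuasiOriented (P ∩ reflP z P) v

/-- The polytope `P^φ = π^φ(P × P) ⊆ ℝ^{n+1}`, where `π^φ(x,y) = ((x+y)/2, ⟨x - y, v⟩)`. -/
def Pphi {n : ℕ} (P : Set (Vec n)) (v : Vec n) : Set (Vec (n + 1)) :=
  {w | ∃ x ∈ P, ∃ y ∈ P, w = Fin.snoc ((1 / 2 : ℝ) • (x + y)) (dot (x - y) v)}

/-- The pair of faces `(F, G)` belongs to `F^φ`: there are no `x ∈ F`, `y ∈ G`, `λ > 0` with
`(π(x,y), φ(x,y) - λ) ∈ P^φ`. -/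
def InFphi {n : ℕ} (P : Set (Vec n)) (v : Vec n) (F G : Set (Vec n)) : Prop :=
  ¬ ∃ x ∈ F, ∃ y ∈ G, ∃ lam : ℝ, 0 < lam ∧
      (Fin.snoc ((1 / 2 : ℝ) • (x + y)) (dot (x - y) v - lam) : Vec (n + 1)) ∈ Pphi P v

/-- The set `(A + B)/2`. -/
def avgSet {n : ℕ} (A B : Set (Vec n)) : Set (Vec n) :=
  {z | ∃ x ∈ A, ∃ y ∈ B, z = (1 / 2 : ℝ) • (x + y)}

/-- The coherent subdivision `π(F^φ)` is tight. -/
def TightSub {n : ℕ} (P : Set (Vec n)) (v : Vec n) : Prop :=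
  ∀ F G : Set (Vec n), IsFace P F → IsFace P G → F.Nonempty → G.Nonempty →
    InFphi P v F G → sdim F + sdim G = sdim (avgSet F G)

/-- `d` is a direction of an edge of `P ∩ ρ_z P` for some `z ∈ P`; the hyperplanes of the
fundamental hyperplane arrangement `H_P` are the orthogonal complements of such directions. -/
def EdgeDir {n : ℕ} (P : Set (Vec n)) (d : Vec n) : Prop :=
  d ≠ 0 ∧ ∃ z ∈ P, ∃ E, IsEdge (P ∩ reflP z P) E ∧ d ∈ (affineSpan ℝ E).direction

/-- The cone `cone(-N_P(F) ∪ N_P(G))`. -/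
def diagCone {n : ℕ} (P F G : Set (Vec n)) : Set (Vec n) :=
  coneOf ((Neg.neg '' normalCone P F) ∪ normalCone P G)

/-!
`(F, G) ∈ F^φ` means that no exchange `x ↦ x + d`, `y ↦ y - d` with `x ∈ F`, `y ∈ G` and both
new points in `P` lowers `φ`. The existence of `f ∈ N_P(F)` with `f + εv ∈ N_P(G)` is a finite
system of linear inequalities indexed by pairs of vertices, and Farkas' lemma says that it is
infeasible exactly when a conic combination of vertex differences produces such an exchange.
The second form of the criterion is the first one translated by `εv`.

For the dimension count: if the directions of `F` and `G` span `ℝⁿ`, two points of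
`K = (N_P(F) + εv) ∩ N_P(G)` differ by a vector orthogonal to everything, so `K` is a point.
Conversely, suppose `K = {c}` and put `f = c - εv`. A direction `d` that respects the constraints
active at `f` and at `c` could be added to `f` and `c` for a short time, so no such `d` is nonzero.
Let `F'`, `G'` be the faces exposed by `f` and `c`. Taking `d` orthogonal to both shows that their
directions span `ℝⁿ`, and tightness makes the sum direct. Taking `d` equal to the normal of `F`
on the first summand and `0` on the second shows `F' = F`; symmetrically `G' = G`.
-/

open scoped Pointwise

namespace PointedCone

section Module

variable {E F G : Type*} [AddCommGroup E] [Module ℝ E] [AddCommGroup F] [Module ℝ F]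
  [AddCommGroup G] [Module ℝ G]

lemma mem_hull_finset_iff {T : Finset E} {x : E} :
    x ∈ hull ℝ (T : Set E) ↔ ∃ c : E → ℝ, (∀ t ∈ T, 0 ≤ c t) ∧ ∑ t ∈ T, c t • t = x := by
  classical
  rw [Submodule.mem_span_finset]
  constructor
  · rintro ⟨c, -, rfl⟩
    exact ⟨fun t => c t, fun t _ => (c t).2, rfl⟩
  · rintro ⟨c, hc, rfl⟩
    refine ⟨fun t => if h : t ∈ T then ⟨c t, hc t h⟩ else 0, fun t ht => ?_,
      Finset.sum_congr rfl fun t ht => by simp [ht, Nonneg.mk_smul]⟩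
    by_contra h
    exact (Function.mem_support.1 ht) (dif_neg h)

/-- Carathéodory's theorem for cones. -/
lemma exists_linearIndepOn_of_mem_hull {T : Finset E} {x : E} (hx : x ∈ hull ℝ (T : Set E)) :
    ∃ I ⊆ T, LinearIndepOn ℝ id (I : Set E) ∧ x ∈ hull ℝ (I : Set E) := by
  classical
  induction T using Finset.strongInduction with
  | H T ih =>
  by_cases hT : LinearIndepOn ℝ id (T : Set E)
  · exact ⟨T, subset_rfl, hT, hx⟩
  obtain ⟨c, hc, rfl⟩ := mem_hull_finset_iff.1 hx
  obtain ⟨g, hg, t₀, ht₀, hgt₀⟩ : ∃ g : E → ℝ, ∑ t ∈ T, g t • t = 0 ∧ ∃ t ∈ T, 0 < g t := by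
    obtain ⟨g, hg, t₀, ht₀, hgt₀⟩ : ∃ g : E → ℝ, ∑ t ∈ T, g t • t = 0 ∧ ∃ t ∈ T, g t ≠ 0 := by
      simpa [linearIndepOn_finset_iff] using hT
    rcases hgt₀.lt_or_gt with hneg | hpos
    · exact ⟨-g, by simp [neg_smul, hg], t₀, ht₀, by simpa using hneg⟩
    · exact ⟨g, hg, t₀, ht₀, hpos⟩
  obtain ⟨t₁, ht₁, hmin⟩ :=
    (T.filter (0 < g ·)).exists_min_image (fun t => c t / g t) ⟨t₀, by simp [ht₀, hgt₀]⟩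
  rw [Finset.mem_filter] at ht₁
  set r := c t₁ / g t₁
  have hr : 0 ≤ r := div_nonneg (hc _ ht₁.1) ht₁.2.le
  -- subtracting `r • g` keeps the coefficients nonnegative and kills the one at `t₁`
  have hc' : ∀ t ∈ T, 0 ≤ c t - r * g t := by
    intro t ht
    rcases le_or_gt (g t) 0 with hgt | hgt
    · nlinarith [hc t ht]
    · have := hmin t (by simp [ht, hgt])
      rw [le_div_iff₀ hgt] at this
      linarith
  have hsum : ∑ t ∈ T.erase t₁, (c t - r * g t) • t = ∑ t ∈ T, c t • t := by
    rw [Finset.sum_erase _ (by simp [r, div_mul_cancel₀ _ ht₁.2.ne']),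
      show ∑ t ∈ T, c t • t = ∑ t ∈ T, c t • t - r • ∑ t ∈ T, g t • t by simp [hg]]
    simp [sub_smul, Finset.sum_sub_distrib, Finset.smul_sum, mul_smul]
  obtain ⟨I, hI, hIli, hxI⟩ := ih _ (Finset.erase_ssubset ht₁.1)
    (mem_hull_finset_iff.2 ⟨_, fun t ht => hc' t (Finset.mem_of_mem_erase ht), hsum⟩)
  exact ⟨I, hI.trans (Finset.erase_subset _ _), hIli, hxI⟩

lemma exists_eq_add_of_mem_hull_image_union {f : E →ₗ[ℝ] G} {g : F →ₗ[ℝ] G} {A : Set E}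
    {B : Set F} {w : G} (hw : w ∈ hull ℝ (f '' A ∪ g '' B)) :
    ∃ a ∈ hull ℝ A, ∃ b ∈ hull ℝ B, w = f a + g b := by
  induction hw using Submodule.span_induction with
  | mem w hw =>
    rcases hw with ⟨a, ha, rfl⟩ | ⟨b, hb, rfl⟩
    · exact ⟨a, subset_hull ha, 0, zero_mem _, by simp⟩
    · exact ⟨0, zero_mem _, b, subset_hull hb, by simp⟩
  | zero => exact ⟨0, zero_mem _, 0, zero_mem _, by simp⟩
  | add w w' _ _ h h' =>
    obtain ⟨a, ha, b, hb, rfl⟩ := h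
    obtain ⟨a', ha', b', hb', rfl⟩ := h'
    exact ⟨a + a', add_mem ha ha', b + b', add_mem hb hb', by simp only [map_add]; abel⟩
  | smul r w _ h =>
    obtain ⟨a, ha, b, hb, rfl⟩ := h
    exact ⟨r • a, Submodule.smul_mem _ r ha, r • b, Submodule.smul_mem _ r hb, by
      simp only [← Nonneg.coe_smul, map_smul, smul_add]⟩

lemma exists_forall_add_smul_mem_of_mem_hull_sub {C Y : Set E} (hC : Convex ℝ C)
    (hY : Convex ℝ Y) (hYC : Y ⊆ C) (hYne : Y.Nonempty) {z : E} (hz : z ∈ hull ℝ (C - Y)) :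
    ∃ y ∈ Y, ∃ δ : ℝ, 0 < δ ∧ ∀ t ∈ Set.Icc 0 δ, y + t • z ∈ C := by
  induction hz using Submodule.span_induction with
  | mem z hz =>
    obtain ⟨x, hx, y, hy, rfl⟩ := hz
    exact ⟨y, hy, 1, one_pos, fun t ht => hC.add_smul_sub_mem (hYC hy) hx ht⟩
  | zero =>
    obtain ⟨y, hy⟩ := hYne
    exact ⟨y, hy, 1, one_pos, fun t _ => by simpa using hYC hy⟩
  | add z z' _ _ h h' =>
    obtain ⟨y, hy, δ, hδ, h⟩ := h
    obtain ⟨y', hy', δ', hδ', h'⟩ := h'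
    refine ⟨(1 / 2 : ℝ) • y + (1 / 2 : ℝ) • y', hY hy hy' (by norm_num) (by norm_num) (by norm_num),
      min δ δ' / 2, by positivity, fun t ⟨ht0, ht⟩ => ?_⟩
    have h2t : 2 * t ≤ min δ δ' := by linarith
    convert hC (h (2 * t) ⟨by linarith, h2t.trans (min_le_left _ _)⟩)
      (h' (2 * t) ⟨by linarith, h2t.trans (min_le_right _ _)⟩)
      (by norm_num : (0 : ℝ) ≤ 1 / 2) (by norm_num : (0 : ℝ) ≤ 1 / 2) (by norm_num) using 1
    module
  | smul r z _ h =>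
    obtain ⟨y, hy, δ, hδ, h⟩ := h
    have hr : (0 : ℝ) ≤ r := r.2
    refine ⟨y, hy, δ / (r + 1), by positivity, fun t ⟨ht0, ht⟩ => ?_⟩
    rw [← Nonneg.coe_smul, smul_smul]
    refine h _ ⟨by positivity, ?_⟩
    rw [le_div_iff₀ (by positivity)] at ht
    nlinarith

end Module

section Normed

variable {E : Type*} [NormedAddCommGroup E] [NormedSpace ℝ E]

lemma isClosed_hull_of_linearIndepOn {I : Finset E} (hI : LinearIndepOn ℝ id (I : Set E)) :
    IsClosed (hull ℝ (I : Set E) : Set E) := by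
  classical
  set L := Fintype.linearCombination ℝ (fun x : (I : Set E) => id (x : E))
  have hL : (hull ℝ (I : Set E) : Set E) = L '' {c | 0 ≤ c} := by
    ext x
    simp only [SetLike.mem_coe, mem_hull_finset_iff, Set.mem_image, Set.mem_ofPred_eq, L,
      Fintype.linearCombination_apply, id]
    constructor
    · rintro ⟨c, hc, rfl⟩
      exact ⟨fun t => c t, fun t => hc t t.2, (Finset.sum_coe_sort I (fun t => c t • t))⟩
    · rintro ⟨c, hc, rfl⟩
      refine ⟨fun t => if h : t ∈ I then c ⟨t, h⟩ else 0, fun t ht => by simpa [ht] using hc _, ?_⟩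
      rw [← Finset.sum_coe_sort I]
      exact Finset.sum_congr rfl fun t _ => by simp
  rw [hL]
  exact (LinearMap.isClosedEmbedding_of_injective
    (LinearMap.ker_eq_bot.2 hI.fintypeLinearCombination_injective)).isClosedMap _
    (isClosed_le continuous_const continuous_id)

lemma isClosed_hull_finset (T : Finset E) : IsClosed (hull ℝ (T : Set E) : Set E) := by
  classical
  have : (hull ℝ (T : Set E) : Set E) =
      ⋃ I ∈ T.powerset.filter (fun I : Finset E => LinearIndepOn ℝ id (I : Set E)),
        (hull ℝ (I : Set E) : Set E) := by
    refine subset_antisymm (fun x hx => ?_) (Set.iUnion₂_subset fun I hI => ?_)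
    · obtain ⟨I, hIT, hI, hxI⟩ := exists_linearIndepOn_of_mem_hull hx
      exact Set.mem_biUnion (by simpa [hIT] using hI) hxI
    · exact Submodule.span_mono (by simpa using (Finset.mem_filter.1 hI).1)
  rw [this]
  exact isClosed_biUnion_finset fun I hI =>
    isClosed_hull_of_linearIndepOn (Finset.mem_filter.1 hI).2

/-- **Farkas' lemma** for finitely generated cones. -/
theorem exists_strongDual_of_notMem_hull {s : Set E} (hs : s.Finite) {x : E}
    (hx : x ∉ hull ℝ s) : ∃ f : StrongDual ℝ E, (∀ y ∈ s, 0 ≤ f y) ∧ f x < 0 := by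
  lift s to Finset E using hs
  obtain ⟨f, hf, hfx⟩ := ProperCone.hyperplane_separation_point
    { toSubmodule := hull ℝ (s : Set E), isClosed' := isClosed_hull_finset s } hx
  exact ⟨f, fun y hy => hf y (Submodule.subset_span hy), hfx⟩

end Normed

end PointedCone

lemma image_add_inter_nonempty_iff {α : Type*} [AddGroup α] (A B : Set α) (w : α) :
    (((fun a => a + w) '' A) ∩ B).Nonempty ↔ (A ∩ ((fun b => b - w) '' B)).Nonempty := by
  constructor
  · rintro ⟨_, ⟨a, ha, rfl⟩, hb⟩
    exact ⟨a, ha, a + w, hb, add_sub_cancel_right a w⟩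
  · rintro ⟨_, ha, b, hb, rfl⟩
    exact ⟨b, ⟨b - w, ha, sub_add_cancel b w⟩, hb⟩


section Polytope

open Filter Topology

variable {n : ℕ} {S : Finset (Vec n)} {P F G : Set (Vec n)}

lemma dot_eq_dotProduct (x y : Vec n) : dot x y = x ⬝ᵥ y := rfl

lemma exists_dot_eq (ψ : Module.Dual ℝ (Vec n)) : ∃ d : Vec n, ∀ x, dot d x = ψ x :=
  ⟨(dotProductEquiv ℝ (Fin n)).symm ψ, fun x => by
    conv_rhs => rw [← (dotProductEquiv ℝ (Fin n)).apply_symm_apply ψ]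
    rfl⟩

lemma dot_sub_right (c x y : Vec n) : dot c (x - y) = dot c x - dot c y := dotProduct_sub c x y

lemma IsFace.subset (hF : IsFace P F) : F ⊆ P := by
  obtain ⟨c, rfl⟩ := hF
  exact Set.sep_subset _ _

lemma isLinearMap_dot (c : Vec n) : IsLinearMap ℝ (dot c) :=
  ⟨dotProduct_add c, fun r x => dotProduct_smul r c x⟩

lemma IsFace.convex (hP : Convex ℝ P) (hF : IsFace P F) : Convex ℝ F := by
  obtain ⟨c, rfl⟩ := hF
  intro x hx y hy a b ha hb hab
  refine ⟨hP hx.1 hy.1 ha hb hab, fun z hz => ?_⟩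
  have hxz := hx.2 z hz
  have hyz := hy.2 z hz
  simp only [dot_eq_dotProduct, dotProduct_add, dotProduct_smul, smul_eq_mul] at *
  have hcz : c ⬝ᵥ z = a * c ⬝ᵥ z + b * c ⬝ᵥ z := by rw [← add_mul, hab, one_mul]
  nlinarith [mul_le_mul_of_nonneg_left hxz ha, mul_le_mul_of_nonneg_left hyz hb]

lemma IsFace.eq_convexHull_inter (hS : P = convexHull ℝ S) (hF : IsFace P F) :
    F = convexHull ℝ (↑S ∩ F) := by
  classical
  refine subset_antisymm ?_
    (convexHull_min Set.inter_subset_right (hF.convex (hS ▸ convex_convexHull ℝ _)))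
  obtain ⟨c, rfl⟩ := hF
  intro x hx
  obtain ⟨w, hw0, hw1, hwx⟩ := Finset.mem_convexHull'.1 (hS ▸ hx.1)
  have hSP : ∀ s ∈ S, s ∈ P := fun s hs => hS ▸ subset_convexHull ℝ _ hs
  have hslack : ∀ s ∈ S, w s * (dot c x - dot c s) = 0 := by
    refine (Finset.sum_eq_zero_iff_of_nonneg fun s hs =>
      mul_nonneg (hw0 s hs) (sub_nonneg.2 (hx.2 s (hSP s hs)))).1 ?_
    have hcx : ∑ s ∈ S, w s * dot c s = dot c x := by
      simp [← hwx, dot_eq_dotProduct, dotProduct_sum, dotProduct_smul]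
    simp only [mul_sub, Finset.sum_sub_distrib, ← Finset.sum_mul, hw1, one_mul, hcx, sub_self]
  have hsupp : ∀ s ∈ S, w s ≠ 0 → s ∈ {x ∈ P | ∀ y ∈ P, dot c y ≤ dot c x} := by
    intro s hs hws
    have hcs := sub_eq_zero.1 ((mul_eq_zero.1 (hslack s hs)).resolve_left hws)
    exact ⟨hSP s hs, fun y hy => hcs ▸ hx.2 y hy⟩
  have hx' : x ∈ convexHull ℝ (S.filter (· ∈ {x ∈ P | ∀ y ∈ P, dot c y ≤ dot c x}) : Set (Vec n)) :=
    Finset.mem_convexHull'.2 ⟨w, fun s hs => hw0 s (Finset.mem_filter.1 hs).1,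
      by rwa [Finset.sum_filter_of_ne hsupp],
      by rwa [Finset.sum_filter_of_ne fun s hs h => hsupp s hs (left_ne_zero_of_smul h)]⟩
  convert hx' using 2
  ext; simp

lemma mem_normalCone_iff (hS : P = convexHull ℝ S) (hF : IsFace P F) {c : Vec n} :
    c ∈ normalCone P F ↔ ∀ a ∈ (S : Set (Vec n)) - (↑S ∩ F), dot c a ≤ 0 := by
  have hdot : ∀ s p, dot c (s - p) ≤ 0 ↔ dot c s ≤ dot c p := fun s p => by
    rw [dot_sub_right, sub_nonpos]
  constructor
  · rintro hc _ ⟨s, hs, p, hp, rfl⟩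
    exact (hdot s p).2 ((hc hp.2).2 s (hS ▸ subset_convexHull ℝ _ hs))
  · intro hc x hx
    refine ⟨hF.subset hx, fun y hy => ?_⟩
    refine convexHull_min (fun s hs => ?_) (convex_halfSpace_le (isLinearMap_dot c) _) (hS ▸ hy)
    exact convexHull_min (fun p hp => (hdot s p).1 (hc _ ⟨s, hs, p, hp, rfl⟩))
      (convex_halfSpace_ge (isLinearMap_dot c) _) (hF.eq_convexHull_inter hS ▸ hx)

lemma inFphi_of_mem_normalCone {v f : Vec n} {ε : ℝ} (hε : 0 < ε) (hf : f ∈ normalCone P F)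
    (hg : f + ε • v ∈ normalCone P G) : InFphi P v F G := by
  rintro ⟨x, hx, y, hy, lam, hlam, x', hx', y', hy', heq⟩
  obtain ⟨hmid, hphi⟩ := Fin.snoc_inj.1 heq
  have hsum : x + y = x' + y' := smul_right_injective _ (by norm_num : (1 / 2 : ℝ) ≠ 0) hmid
  have hfx := (hf hx).2 x' hx'
  have hgy := (hg hy).2 y' hy'
  have hfsum := congrArg (dot f) hsum
  have hvsum := congrArg (dot v) hsum
  simp only [dot_eq_dotProduct, dotProduct_add, add_dotProduct, sub_dotProduct,
    smul_dotProduct, smul_eq_mul] at hfx hgy hfsum hvsum hphi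
  simp only [dotProduct_comm v] at hvsum
  have hvy : y' ⬝ᵥ v ≤ y ⬝ᵥ v := by
    rw [dotProduct_comm y', dotProduct_comm y]
    exact le_of_mul_le_mul_left (by linarith) hε
  linarith

lemma not_inFphi_of_add_mem_of_sub_mem {v x y d : Vec n} (hx : x ∈ F) (hy : y ∈ G) (hxd : x + d ∈ P)
    (hyd : y - d ∈ P) (hd : dot d v < 0) : ¬ InFphi P v F G := by
  refine fun h => h ⟨x, hx, y, hy, -2 * dot d v, by linarith, x + d, hxd, y - d, hyd, ?_⟩
  congr 1
  · module
  · simp only [dot_eq_dotProduct, sub_dotProduct, add_dotProduct]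
    ring

theorem exists_mem_normalCone_add_smul_of_inFphi (hS : P = convexHull ℝ S) (hF : IsFace P F)
    (hG : IsFace P G) (hFne : F.Nonempty) (hGne : G.Nonempty) {v : Vec n} (hIn : InFphi P v F G)
    {ε : ℝ} (hε : 0 < ε) : ∃ f ∈ normalCone P F, f + ε • v ∈ normalCone P G := by
  set ι₁ : Vec n →ₗ[ℝ] Vec n × ℝ := LinearMap.inl ℝ _ _
  set ι₂ : Vec n →ₗ[ℝ] Vec n × ℝ := LinearMap.id.prod (dotProductEquiv ℝ (Fin n) v)
  set T := ι₁ '' (↑S - (↑S ∩ F)) ∪ ι₂ '' (↑S - (↑S ∩ G))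
  have hPconv : Convex ℝ P := hS ▸ convex_convexHull ℝ _
  have hSP : (S : Set (Vec n)) ⊆ P := hS ▸ subset_convexHull ℝ _
  -- Farkas' alternative for the vertex system of `f`, homogenised in `Vec n × ℝ`: either `(0, 1)`
  -- lies in the cone spanned by `T`, which yields an exchange lowering `φ`, or a separating
  -- functional yields `f`.
  by_cases he : ((0 : Vec n), (1 : ℝ)) ∈ PointedCone.hull ℝ T
  · exfalso
    obtain ⟨a, ha, b, hb, he⟩ := PointedCone.exists_eq_add_of_mem_hull_image_union he
    obtain ⟨hab, hvb⟩ : a + b = 0 ∧ v ⬝ᵥ b = 1 := by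
      simpa [ι₁, ι₂, Prod.ext_iff, eq_comm] using he
    obtain ⟨x, hx, δ, hδ, hxa⟩ := PointedCone.exists_forall_add_smul_mem_of_mem_hull_sub hPconv
      (hF.convex hPconv) hF.subset hFne
      (Submodule.span_mono (Set.sub_subset_sub hSP Set.inter_subset_right) ha)
    obtain ⟨y, hy, δ', hδ', hyb⟩ := PointedCone.exists_forall_add_smul_mem_of_mem_hull_sub hPconv
      (hG.convex hPconv) hG.subset hGne
      (Submodule.span_mono (Set.sub_subset_sub hSP Set.inter_subset_right) hb)
    set t := min δ δ'
    have hba : b = -a := by rw [eq_neg_iff_add_eq_zero, add_comm, hab]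
    refine not_inFphi_of_add_mem_of_sub_mem hx hy (hxa t ⟨by positivity, min_le_left _ _⟩) ?_ ?_ hIn
    · simpa [hba, sub_eq_add_neg] using hyb t ⟨by positivity, min_le_right _ _⟩
    · rw [dot_eq_dotProduct, smul_dotProduct, dotProduct_comm, ← neg_neg a, ← hba,
        dotProduct_neg, hvb, smul_neg, smul_eq_mul, mul_one, neg_lt_zero]
      exact lt_min hδ hδ'
  · have hT : T.Finite := by
      refine .union (.image _ (.sub ?_ ?_)) (.image _ (.sub ?_ ?_)) <;>
        exact S.finite_toSet.subset (by simp)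
    obtain ⟨ℓ, hℓ, hℓe⟩ := PointedCone.exists_strongDual_of_notMem_hull hT he
    obtain ⟨c, hc⟩ := exists_dot_eq ((ℓ : Vec n × ℝ →ₗ[ℝ] ℝ) ∘ₗ ι₁)
    have hℓ_apply : ∀ z t, ℓ (z, t) = dot c z + t * ℓ (0, 1) := fun z t => by
      rw [hc, show (z, t) = ι₁ z + t • ((0 : Vec n), (1 : ℝ)) by simp [ι₁], map_add, map_smul]
      rfl
    have hγ : ε / ℓ (0, 1) < 0 := div_neg_of_pos_of_neg hε hℓe
    refine ⟨(ε / ℓ (0, 1)) • c, ?_, ?_⟩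
    · refine (mem_normalCone_iff hS hF).2 fun a ha => ?_
      have := hℓ _ (Or.inl ⟨a, ha, rfl⟩)
      rw [show ι₁ a = (a, 0) from rfl, hℓ_apply, zero_mul, add_zero] at this
      rw [dot_eq_dotProduct, smul_dotProduct, smul_eq_mul]
      exact mul_nonpos_of_nonpos_of_nonneg hγ.le this
    · refine (mem_normalCone_iff hS hG).2 fun b hb => ?_
      have := hℓ _ (Or.inr ⟨b, hb, rfl⟩)
      rw [show ι₂ b = (b, dot v b) from rfl, hℓ_apply] at this
      have key : dot ((ε / ℓ (0, 1)) • c + ε • v) b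
          = ε / ℓ (0, 1) * (dot c b + dot v b * ℓ (0, 1)) := by
        have := hℓe.ne
        simp only [dot_eq_dotProduct, add_dotProduct, smul_dotProduct, smul_eq_mul]
        field_simp
      rw [key]
      exact mul_nonpos_of_nonpos_of_nonneg hγ.le this

theorem inFphi_iff_forall_nonempty (hS : P = convexHull ℝ S) (hF : IsFace P F)
    (hG : IsFace P G) (hFne : F.Nonempty) (hGne : G.Nonempty) (v : Vec n) :
    InFphi P v F G ↔
      ∀ ε : ℝ, 0 < ε → (((fun f => f + ε • v) '' normalCone P F) ∩ normalCone P G).Nonempty := by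
  refine ⟨fun hIn ε hε => ?_, fun h => ?_⟩
  · obtain ⟨f, hf, hg⟩ := exists_mem_normalCone_add_smul_of_inFphi hS hF hG hFne hGne hIn hε
    exact ⟨f + ε • v, ⟨f, hf, rfl⟩, hg⟩
  · obtain ⟨_, ⟨f, hf, rfl⟩, hg⟩ := h 1 one_pos
    exact inFphi_of_mem_normalCone one_pos hf hg

lemma sdim_eq_finrank_vectorSpan (A : Set (Vec n)) :
    sdim A = Module.finrank ℝ (vectorSpan ℝ A) := by
  rw [sdim, direction_affineSpan]

lemma sdim_eq_zero_iff {A : Set (Vec n)} : sdim A = 0 ↔ A.Subsingleton := by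
  rw [sdim_eq_finrank_vectorSpan, Submodule.finrank_eq_zero, vectorSpan_eq_bot_iff_subsingleton]

lemma avgSet_comm (A B : Set (Vec n)) : avgSet A B = avgSet B A := by
  ext z
  constructor <;> rintro ⟨x, hx, y, hy, rfl⟩ <;> exact ⟨y, hy, x, hx, by rw [add_comm]⟩

lemma vectorSpan_le_vectorSpan_avgSet (hG : G.Nonempty) :
    vectorSpan ℝ F ≤ vectorSpan ℝ (avgSet F G) := by
  obtain ⟨y, hy⟩ := hG
  rw [vectorSpan_def, Submodule.span_le]
  rintro _ ⟨x, hx, x', hx', rfl⟩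
  have h₁ : (1 / 2 : ℝ) • (x + y) ∈ avgSet F G := ⟨x, hx, y, hy, rfl⟩
  have h₂ : (1 / 2 : ℝ) • (x' + y) ∈ avgSet F G := ⟨x', hx', y, hy, rfl⟩
  dsimp only
  rw [SetLike.mem_coe]
  convert Submodule.smul_mem _ (2 : ℝ) (vsub_mem_vectorSpan ℝ h₁ h₂) using 1
  simp only [vsub_eq_sub]
  module

lemma vectorSpan_avgSet (hF : F.Nonempty) (hG : G.Nonempty) :
    vectorSpan ℝ (avgSet F G) = vectorSpan ℝ F ⊔ vectorSpan ℝ G := by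
  refine le_antisymm ?_ (sup_le (vectorSpan_le_vectorSpan_avgSet hG)
    (avgSet_comm G F ▸ vectorSpan_le_vectorSpan_avgSet hF))
  rw [vectorSpan_def, Submodule.span_le]
  rintro _ ⟨_, ⟨x, hx, y, hy, rfl⟩, _, ⟨x', hx', y', hy', rfl⟩, rfl⟩
  have : (1 / 2 : ℝ) • (x + y) -ᵥ (1 / 2 : ℝ) • (x' + y')
      = (1 / 2 : ℝ) • (x -ᵥ x') + (1 / 2 : ℝ) • (y -ᵥ y') := by
    simp only [vsub_eq_sub]
    module
  dsimp only
  rw [SetLike.mem_coe, this]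
  exact add_mem (Submodule.smul_mem _ _ (Submodule.mem_sup_left (vsub_mem_vectorSpan ℝ hx hx')))
    (Submodule.smul_mem _ _ (Submodule.mem_sup_right (vsub_mem_vectorSpan ℝ hy hy')))

lemma dot_eq_zero_of_mem_normalCone {g w : Vec n} (hg : g ∈ normalCone P F)
    (hw : w ∈ vectorSpan ℝ F) : dot g w = 0 := by
  have : vectorSpan ℝ F ≤ LinearMap.ker (dotProductEquiv ℝ (Fin n) g) := by
    rw [vectorSpan_def, Submodule.span_le]
    rintro _ ⟨x, hx, x', hx', rfl⟩
    have h₁ := (hg hx).2 x' (hg hx').1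
    have h₂ := (hg hx').2 x (hg hx).1
    simp only [SetLike.mem_coe, LinearMap.mem_ker, dotProductEquiv_apply_apply, vsub_eq_sub,
      ← dot_eq_dotProduct, dot_sub_right]
    linarith
  exact this hw

lemma subsingleton_of_sup_eq_top {v : Vec n} {ε : ℝ}
    (h : vectorSpan ℝ F ⊔ vectorSpan ℝ G = ⊤) :
    (((fun f => f + ε • v) '' normalCone P F) ∩ normalCone P G).Subsingleton := by
  rintro _ ⟨⟨f, hf, rfl⟩, hg⟩ _ ⟨⟨f', hf', rfl⟩, hg'⟩
  suffices f - f' = 0 by rw [sub_eq_zero.1 this]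
  have hker : vectorSpan ℝ F ⊔ vectorSpan ℝ G ≤
      LinearMap.ker (dotProductEquiv ℝ (Fin n) (f - f')) := by
    refine sup_le (fun w hw => ?_) (fun w hw => ?_)
    · have h₁ := dot_eq_zero_of_mem_normalCone hf hw
      have h₂ := dot_eq_zero_of_mem_normalCone hf' hw
      simp only [dot_eq_dotProduct] at h₁ h₂
      simp [h₁, h₂]
    · have h₁ := dot_eq_zero_of_mem_normalCone hg hw
      have h₂ := dot_eq_zero_of_mem_normalCone hg' hw
      simp only [dot_eq_dotProduct, add_dotProduct] at h₁ h₂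
      simp only [LinearMap.mem_ker, dotProductEquiv_apply_apply, sub_dotProduct]
      linarith
  rw [h] at hker
  exact dotProduct_self_eq_zero.1 (hker Submodule.mem_top)

lemma eventually_add_smul_mem_normalCone (hS : P = convexHull ℝ S) (hF : IsFace P F)
    {f d : Vec n} (hf : f ∈ normalCone P F)
    (hd : ∀ x ∈ {x ∈ P | ∀ y ∈ P, dot f y ≤ dot f x}, ∀ p ∈ F, dot d (x - p) ≤ 0) :
    ∀ᶠ t in 𝓝[>] (0 : ℝ), f + t • d ∈ normalCone P F := by
  have hA : ((S : Set (Vec n)) - (↑S ∩ F)).Finite :=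
    S.finite_toSet.sub (S.finite_toSet.inter_of_left F)
  simp_rw [mem_normalCone_iff hS hF, eventually_all_finite hA]
  rintro _ ⟨s, hs, p, hp, rfl⟩
  have hlin : ∀ t : ℝ, dot (f + t • d) (s - p) = dot f (s - p) + t * dot d (s - p) := by
    intro t
    simp only [dot_eq_dotProduct, add_dotProduct, smul_dotProduct, smul_eq_mul]
  simp_rw [hlin]
  rcases ((mem_normalCone_iff hS hF).1 hf _ ⟨s, hs, p, hp, rfl⟩).lt_or_eq with hlt | heq
  · have : ContinuousAt (fun t : ℝ => dot f (s - p) + t * dot d (s - p)) 0 := by fun_prop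
    exact nhdsWithin_le_nhds ((this.eventually_lt continuousAt_const (by simpa using hlt)).mono
      fun t ht => ht.le)
  · have hsmax : ∀ y ∈ P, dot f y ≤ dot f s := fun y hy => by
      rw [dot_sub_right, sub_eq_zero] at heq
      exact heq ▸ (hf hp.2).2 y hy
    have hds := hd s ⟨hS ▸ subset_convexHull ℝ _ hs, hsmax⟩ p hp.2
    filter_upwards [self_mem_nhdsWithin] with t ht
    rw [heq, zero_add]
    exact mul_nonpos_of_nonneg_of_nonpos (le_of_lt ht) hds

lemma exists_dot_eq_of_isCompl {U W : Submodule ℝ (Vec n)} (h : IsCompl U W) (c : Vec n) :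
    ∃ d : Vec n, (∀ u ∈ U, dot d u = dot c u) ∧ ∀ w ∈ W, dot d w = 0 := by
  obtain ⟨d, hd⟩ := exists_dot_eq ((dotProductEquiv ℝ (Fin n) c) ∘ₗ U.projection W h)
  exact ⟨d, fun u hu => by simp [hd, Submodule.projection_apply_of_mem_left, hu, dot_eq_dotProduct],
    fun w hw => by simp [hd, Submodule.projection_apply_of_mem_right, hw]⟩

lemma subset_of_dot_eq_zero_on_vectorSpan {c p : Vec n} {F' : Set (Vec n)} (hF'P : F' ⊆ P)
    (hp : p ∈ F') (hpmax : ∀ y ∈ P, dot c y ≤ dot c p)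
    (hc : ∀ w ∈ vectorSpan ℝ F', dot c w = 0) :
    F' ⊆ {x ∈ P | ∀ y ∈ P, dot c y ≤ dot c x} := fun x hx => by
  have hcx := hc _ (vsub_mem_vectorSpan ℝ hx hp)
  rw [vsub_eq_sub, dot_sub_right, sub_eq_zero] at hcx
  exact ⟨hF'P hx, hcx ▸ hpmax⟩

lemma eq_zero_of_subsingleton_inter_normalCone (hS : P = convexHull ℝ S) (hF : IsFace P F)
    (hG : IsFace P G) {v f d : Vec n} {ε : ℝ} (hf : f ∈ normalCone P F)
    (hg : f + ε • v ∈ normalCone P G)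
    (hK : (((fun f => f + ε • v) '' normalCone P F) ∩ normalCone P G).Subsingleton)
    (hdF : ∀ x ∈ {x ∈ P | ∀ y ∈ P, dot f y ≤ dot f x}, ∀ p ∈ F, dot d (x - p) ≤ 0)
    (hdG : ∀ x ∈ {x ∈ P | ∀ y ∈ P, dot (f + ε • v) y ≤ dot (f + ε • v) x}, ∀ q ∈ G,
      dot d (x - q) ≤ 0) :
    d = 0 := by
  obtain ⟨t, ⟨htF, htG⟩, ht⟩ := (((eventually_add_smul_mem_normalCone hS hF hf hdF).and
    (eventually_add_smul_mem_normalCone hS hG hg hdG)).and self_mem_nhdsWithin).exists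
  have := hK ⟨⟨f + t • d, htF, rfl⟩, show f + t • d + ε • v ∈ _ by rwa [add_right_comm]⟩
    ⟨⟨f, hf, rfl⟩, hg⟩
  simpa [add_right_comm _ (t • d), ht.ne'] using this

lemma vectorSpan_sup_eq_top_of_forall_eq_zero {F' G' : Set (Vec n)} (hFF' : F ⊆ F') (hGG' : G ⊆ G')
    (key : ∀ d : Vec n, (∀ x ∈ F', ∀ p ∈ F, dot d (x - p) ≤ 0) →
      (∀ y ∈ G', ∀ q ∈ G, dot d (y - q) ≤ 0) → d = 0) :
    vectorSpan ℝ F' ⊔ vectorSpan ℝ G' = ⊤ := by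
  by_contra hne
  obtain ⟨ψ, hψ, hle⟩ := Submodule.exists_le_ker_of_lt_top _ (lt_top_iff_ne_top.2 hne)
  obtain ⟨d, hd⟩ := exists_dot_eq ψ
  have hd0 : ∀ w ∈ vectorSpan ℝ F' ⊔ vectorSpan ℝ G', dot d w = 0 :=
    fun w hw => (hd w).trans (hle hw)
  have := key d
    (fun x hx p hp => (hd0 _ (Submodule.mem_sup_left (vsub_mem_vectorSpan ℝ hx (hFF' hp)))).le)
    (fun y hy q hq => (hd0 _ (Submodule.mem_sup_right (vsub_mem_vectorSpan ℝ hy (hGG' hq)))).le)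
  exact hψ (LinearMap.ext fun x => by simp [← hd, this, dot_eq_dotProduct])

lemma subset_of_isCompl_vectorSpan {F' G' : Set (Vec n)} (hFF' : F ⊆ F') (hGG' : G ⊆ G')
    (key : ∀ d : Vec n, (∀ x ∈ F', ∀ p ∈ F, dot d (x - p) ≤ 0) →
      (∀ y ∈ G', ∀ q ∈ G, dot d (y - q) ≤ 0) → d = 0)
    (hF : IsFace P F) (hFne : F.Nonempty) (hF'P : F' ⊆ P)
    (hcompl : IsCompl (vectorSpan ℝ F') (vectorSpan ℝ G')) : F' ⊆ F := by
  obtain ⟨c, rfl⟩ := hF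
  obtain ⟨p, hp⟩ := hFne
  obtain ⟨d, hdF', hdG'⟩ := exists_dot_eq_of_isCompl hcompl c
  have hd : d = 0 := key d
    (fun x hx q hq => by
      rw [hdF' (x - q) (vsub_mem_vectorSpan ℝ hx (hFF' hq)), dot_sub_right, sub_nonpos]
      exact hq.2 x (hF'P hx))
    (fun y hy q hq => (hdG' (y - q) (vsub_mem_vectorSpan ℝ hy (hGG' hq))).le)
  exact subset_of_dot_eq_zero_on_vectorSpan hF'P (hFF' hp) hp.2
    fun w hw => by rw [← hdF' w hw, hd, dot_eq_dotProduct, zero_dotProduct]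

theorem sdim_add_sdim_eq_of_subsingleton (hS : P = convexHull ℝ S) (hF : IsFace P F)
    (hG : IsFace P G) (hFne : F.Nonempty) (hGne : G.Nonempty) {v : Vec n}
    (htight : TightSub P v) (hIn : InFphi P v F G) {ε : ℝ} (hε : 0 < ε)
    (hK : (((fun f => f + ε • v) '' normalCone P F) ∩ normalCone P G).Subsingleton) :
    sdim F + sdim G = n := by
  obtain ⟨f, hf, hg⟩ := exists_mem_normalCone_add_smul_of_inFphi hS hF hG hFne hGne hIn hε
  set F' := {x ∈ P | ∀ y ∈ P, dot f y ≤ dot f x}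
  set G' := {x ∈ P | ∀ y ∈ P, dot (f + ε • v) y ≤ dot (f + ε • v) x}
  have hFF' : F ⊆ F' := hf
  have hGG' : G ⊆ G' := hg
  have key := fun d => eq_zero_of_subsingleton_inter_normalCone (d := d) hS hF hG hf hg hK
  have htop := vectorSpan_sup_eq_top_of_forall_eq_zero hFF' hGG' key
  have hcompl : IsCompl (vectorSpan ℝ F') (vectorSpan ℝ G') := by
    have htight' := htight F' G' ⟨f, rfl⟩ ⟨_, rfl⟩ (hFne.mono hFF') (hGne.mono hGG')
      (inFphi_of_mem_normalCone hε (fun _ hx => hx) (fun _ hx => hx))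
    rw [sdim_eq_finrank_vectorSpan, sdim_eq_finrank_vectorSpan, sdim_eq_finrank_vectorSpan,
      vectorSpan_avgSet (hFne.mono hFF') (hGne.mono hGG')] at htight'
    have := Submodule.finrank_sup_add_finrank_inf_eq (vectorSpan ℝ F') (vectorSpan ℝ G')
    exact ⟨disjoint_iff.2 (Submodule.finrank_eq_zero.1 (by omega)), codisjoint_iff.2 htop⟩
  have hF'F := subset_of_isCompl_vectorSpan hFF' hGG' key hF hFne (Set.sep_subset _ _) hcompl
  have hG'G := subset_of_isCompl_vectorSpan hGG' hFF' (fun d h₁ h₂ => key d h₂ h₁) hG hGne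
    (Set.sep_subset _ _) hcompl.symm
  rw [htight F G hF hG hFne hGne hIn, sdim_eq_finrank_vectorSpan, vectorSpan_avgSet hFne hGne,
    hFF'.antisymm hF'F, hGG'.antisymm hG'G, htop, finrank_top, Module.finrank_fin_fun]

end Polytope

/-- `(F,G) ∈ F^φ` iff `(N_P(F) + εv) ∩ N_P(G) ≠ ∅` for all `ε > 0`, iff
`N_P(F) ∩ (N_P(G) - εv) ≠ ∅` for all `ε > 0`. Moreover, if `P` is full-dimensional and the
coherent subdivision `π(F^φ)` is tight, a pair `(F,G) ∈ F^φ` satisfies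
`dim F + dim G = dim P` iff the intersection `(N_P(F) + εv) ∩ N_P(G)` has dimension zero. -/
theorem stmt2 {n : ℕ} (P : Set (Vec n)) (v : Vec n) (F G : Set (Vec n))
    (hP : IsPolytope P) (hF : IsFace P F) (hG : IsFace P G)
    (hFne : F.Nonempty) (hGne : G.Nonempty) :
    (InFphi P v F G ↔
      ∀ ε : ℝ, 0 < ε → (((fun f => f + ε • v) '' normalCone P F) ∩ normalCone P G).Nonempty) ∧
    (InFphi P v F G ↔
      ∀ ε : ℝ, 0 < ε → (normalCone P F ∩ ((fun g => g - ε • v) '' normalCone P G)).Nonempty) ∧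
    (sdim P = n → TightSub P v → InFphi P v F G → ∀ ε : ℝ, 0 < ε →
      (sdim F + sdim G = sdim P ↔
        sdim (((fun f => f + ε • v) '' normalCone P F) ∩ normalCone P G) = 0)) := by
  obtain ⟨S, hS⟩ := hP
  have hInFphi := inFphi_iff_forall_nonempty hS hF hG hFne hGne v
  refine ⟨hInFphi, hInFphi.trans (forall₂_congr fun ε _ => image_add_inter_nonempty_iff _ _ _),
    fun hdim htight hIn ε hε => ?_⟩
  rw [sdim_eq_zero_iff, hdim]
  refine ⟨fun hdimFG => subsingleton_of_sup_eq_top (Submodule.eq_top_of_finrank_eq ?_),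
    sdim_add_sdim_eq_of_subsingleton hS hF hG hFne hGne htight hIn hε⟩
  rw [← vectorSpan_avgSet hFne hGne, ← sdim_eq_finrank_vectorSpan, ← htight F G hF hG hFne hGne hIn,
    hdimFG, Module.finrank_fin_fun]
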